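/- Let a > 0, h > 0, u_0 ∈ ℝ, and let (V̂_k)_{k≥0} be the random timestep Euler chain for the ODE u' = −au with initial value u_0, i.e. V̂_0 = u_0 and V̂_k = (1 − a H_k) V̂_{k−1} with independent H_k ∼ Exp(mean h). Then for every k ∈ ℕ₀: 𝔼[V̂_k] = (1 − ah)^k · u_0. In particular, if u_0 ≠ 0, then 𝔼[V̂_k] → 0 as k → ∞ if and only if ah < 2. -/

import Mathlib

open MeasureTheory ProbabilityTheory
open scoped ENNReal NNReal

open Real Set in
lemma expMean_aux {r : ℝ} (hr : 0 < r) :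
    Integrable (fun x : ℝ => x) (expMeasure r) ∧ ∫ x, x ∂(expMeasure r) = r⁻¹ := by
  have hd : Measurable fun x : ℝ => (exponentialPDFReal r x).toNNReal :=
    (measurable_exponentialPDFReal r).real_toNNReal
  have hmeas_eq : expMeasure r
      = volume.withDensity (fun x => ((exponentialPDFReal r x).toNNReal : ℝ≥0∞)) := by
    rfl
  set g : ℝ → ℝ := fun x => exponentialPDFReal r x * x with hgdef
  have hsmul : ∀ x : ℝ, ((exponentialPDFReal r x).toNNReal : ℝ) • x = g x := fun x => by
    simp [g, Real.coe_toNNReal _ (exponentialPDFReal_nonneg hr x), smul_eq_mul]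
  have hg_zero : ∀ x ∈ Iic (0:ℝ), g x = 0 := by
    intro x hx
    rcases lt_or_eq_of_le (mem_Iic.mp hx) with hx' | hx'
    · simp [g, exponentialPDFReal, gammaPDFReal, if_neg (not_le.mpr hx')]
    · simp [g, hx']
  have hg_Ioi_eq : ∀ x ∈ Ioi (0:ℝ), g x = r * (x ^ ((2:ℝ) - 1) * exp (-(r * x))) := by
    intro x hx
    have hx0 : (0:ℝ) ≤ x := le_of_lt hx
    simp only [g, exponentialPDFReal, gammaPDFReal, if_pos hx0]
    rw [show ((2:ℝ) - 1) = (1:ℝ) by norm_num, rpow_one]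
    simp [Real.Gamma_one]
    ring
  have hgIoi : IntegrableOn g (Ioi 0) := by
    have h1 : IntegrableOn (fun x : ℝ => x ^ (1:ℝ) * exp (-r * x ^ (1:ℝ))) (Ioi 0) :=
      integrableOn_rpow_mul_exp_neg_mul_rpow (by norm_num) one_pos hr
    have h2 : IntegrableOn (fun x : ℝ => r * (x ^ ((2:ℝ) - 1) * exp (-(r * x)))) (Ioi 0) := by
      have h1' : IntegrableOn (fun x : ℝ => r * (x ^ (1:ℝ) * Real.exp (-r * x ^ (1:ℝ)))) (Ioi 0) :=
        h1.const_mul r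
      refine h1'.congr_fun (fun x hx => ?_) measurableSet_Ioi
      rw [show ((2:ℝ) - 1) = (1:ℝ) by norm_num]
      simp [rpow_one, neg_mul]
    exact h2.congr_fun (fun x hx => (hg_Ioi_eq x hx).symm) measurableSet_Ioi
  have hgIic : IntegrableOn g (Iic 0) :=
    (integrableOn_zero).congr_fun (fun x hx => (hg_zero x hx).symm) measurableSet_Iic
  have hgInt : Integrable g := by
    have := hgIic.union hgIoi
    rwa [Iic_union_Ioi, integrableOn_univ] at this
  have hgval : ∫ x, g x = r⁻¹ := by
    have hcompl : ∫ x in Ioi (0:ℝ), g x = ∫ x, g x := by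
      apply setIntegral_eq_integral_of_forall_compl_eq_zero
      intro x hx
      exact hg_zero x (mem_Iic.mpr (not_lt.mp (fun hc => hx hc)))
    rw [← hcompl]
    rw [setIntegral_congr_fun measurableSet_Ioi hg_Ioi_eq, integral_const_mul,
      integral_rpow_mul_exp_neg_mul_Ioi (by norm_num) hr, Real.Gamma_two]
    rw [show ((1:ℝ)/r) ^ (2:ℝ) = r⁻¹ * r⁻¹ by
      rw [show (2:ℝ) = ((2:ℕ):ℝ) by norm_num, rpow_natCast]; field_simp]
    field_simp
  constructor
  · rw [hmeas_eq, integrable_withDensity_iff_integrable_smul hd]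
    exact hgInt.congr (Filter.Eventually.of_forall fun x => (hsmul x).symm)
  · rw [hmeas_eq, integral_withDensity_eq_integral_smul hd]
    simp only [NNReal.smul_def, hsmul]
    exact hgval

/-- The random timestep Euler chain for `u' = −au`:
`V̂_0 = u₀`, `V̂_k = (1 − a H_k) V̂_{k−1}` (here `H i` stands for `H_{i+1}`). -/
noncomputable def eulerChain1 {Ω : Type*} (a u0 : ℝ) (H : ℕ → Ω → ℝ) : ℕ → Ω → ℝ
  | 0, _ => u0
  | (k + 1), ω => (1 - a * H k ω) * eulerChain1 a u0 H k ω

/-- `𝔼[V̂_k] = (1 − ah)^k u₀`, and for `u₀ ≠ 0`, `𝔼[V̂_k] → 0` iff `ah < 2`. -/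
theorem stmt13 {Ω : Type*} [MeasurableSpace Ω] (P : Measure Ω) [IsProbabilityMeasure P]
    (a h u0 : ℝ) (ha : 0 < a) (hh : 0 < h)
    (H : ℕ → Ω → ℝ) (hHmeas : ∀ k, Measurable (H k))
    (hHindep : iIndepFun H P)
    (hHdist : ∀ k, Measure.map (H k) P = expMeasure h⁻¹) :
    (∀ k : ℕ, ∫ ω, eulerChain1 a u0 H k ω ∂P = (1 - a * h) ^ k * u0) ∧
      (u0 ≠ 0 →
        (Filter.Tendsto (fun k : ℕ => ∫ ω, eulerChain1 a u0 H k ω ∂P)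
            Filter.atTop (nhds 0) ↔ a * h < 2)) := by
  have hr : (0:ℝ) < h⁻¹ := inv_pos.mpr hh
  obtain ⟨hexpInt, hexpMean⟩ := expMean_aux hr
  -- mean and integrability of each H k
  have hHint : ∀ k, Integrable (H k) P := by
    intro k
    have := (integrable_map_measure (f := H k) (μ := P)
      (g := fun x : ℝ => x) aestronglyMeasurable_id (hHmeas k).aemeasurable).mp
    rw [hHdist k] at this
    exact this hexpInt
  have hHmean : ∀ k, ∫ ω, H k ω ∂P = h := by
    intro k
    have := integral_map (φ := H k) (μ := P) (f := fun x : ℝ => x)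
      (hHmeas k).aemeasurable (by rw [hHdist k]; exact aestronglyMeasurable_id)
    rw [hHdist k] at this
    rw [← this, hexpMean, inv_inv]
  -- the factors
  set f : ℕ → Ω → ℝ := fun i ω => 1 - a * H i ω with hf
  have hfmeas : ∀ i, Measurable (f i) := fun i =>
    (measurable_const.sub (measurable_const.mul (hHmeas i)))
  have hfindep : iIndepFun f P :=
    hHindep.comp (fun _ : ℕ => fun x : ℝ => 1 - a * x)
      (fun _ => measurable_const.sub (measurable_const.mul measurable_id))
  have hfint : ∀ i, Integrable (f i) P := fun i =>
    (integrable_const (1:ℝ)).sub ((hHint i).const_mul a)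
  have hfmean : ∀ i, ∫ ω, f i ω ∂P = 1 - a * h := by
    intro i
    rw [hf]
    rw [integral_sub (integrable_const _) ((hHint i).const_mul a)]
    simp [integral_const_mul, hHmean i]
  -- product representation of the chain
  have hchain : ∀ k ω, eulerChain1 a u0 H k ω = (∏ i ∈ Finset.range k, f i ω) * u0 := by
    intro k
    induction k with
    | zero => intro ω; simp [eulerChain1]
    | succ n ih =>
      intro ω
      rw [eulerChain1, ih ω, Finset.prod_range_succ]
      ring
  -- integrability and expectation of the products
  have hprod : ∀ n, Integrable (∏ i ∈ Finset.range n, f i) P ∧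
      ∫ ω, (∏ i ∈ Finset.range n, f i) ω ∂P = (1 - a * h) ^ n := by
    intro n
    induction n with
    | zero => exact ⟨by rw [Finset.prod_range_zero]; exact integrable_const (1:ℝ), by simp⟩
    | succ n ih =>
      have hindep := hfindep.indepFun_prod_range_succ hfmeas n
      have hmul : (∏ i ∈ Finset.range (n + 1), f i)
          = (∏ i ∈ Finset.range n, f i) * f n := Finset.prod_range_succ f n
      constructor
      · rw [hmul]; exact hindep.integrable_mul ih.1 (hfint n)
      · have hint := IndepFun.integral_mul_eq_mul_integral hindep ih.1.aestronglyMeasurable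
            (hfint n).aestronglyMeasurable
        calc ∫ ω, (∏ i ∈ Finset.range (n + 1), f i) ω ∂P
            = ∫ ω, ((∏ i ∈ Finset.range n, f i) * f n) ω ∂P := by rw [hmul]
          _ = (∫ ω, (∏ i ∈ Finset.range n, f i) ω ∂P) * ∫ ω, f n ω ∂P := hint
          _ = (1 - a * h) ^ (n + 1) := by rw [ih.2, hfmean n, pow_succ]
  have hmain : ∀ k : ℕ, ∫ ω, eulerChain1 a u0 H k ω ∂P = (1 - a * h) ^ k * u0 := by
    intro k
    calc ∫ ω, eulerChain1 a u0 H k ω ∂P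
        = ∫ ω, (∏ i ∈ Finset.range k, f i) ω * u0 ∂P := by
          refine integral_congr_ae (Filter.Eventually.of_forall fun ω => ?_)
          simpa using hchain k ω
      _ = (∫ ω, (∏ i ∈ Finset.range k, f i) ω ∂P) * u0 := integral_mul_const u0 _
      _ = (1 - a * h) ^ k * u0 := by rw [(hprod k).2]
  refine ⟨hmain, fun hu0 => ?_⟩
  simp only [hmain]
  constructor
  · intro hT
    have hT' : Filter.Tendsto (fun k : ℕ => (1 - a * h) ^ k) Filter.atTop (nhds 0) := by
      have := hT.mul_const u0⁻¹
      simpa [mul_assoc, mul_inv_cancel₀ hu0] using this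
    have habs := tendsto_pow_atTop_nhds_zero_iff.mp hT'
    have := abs_lt.mp habs
    nlinarith [this.1, this.2, mul_pos ha hh]
  · intro hlt
    have habs : |1 - a * h| < 1 := by
      rw [abs_lt]
      constructor <;> nlinarith [mul_pos ha hh]
    have := tendsto_pow_atTop_nhds_zero_iff.mpr habs
    simpa using this.mul_const u0
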